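/- For any finite set of at least 3 alternatives and any positive number of voters, the L.P.R. procedure satisfies the always-a-winner condition (every profile has at least one winner) and nonexistence of social disappointment: no L.P.R. winner is ranked last by at least half of the voters. -/

import Mathlib

open Finset

attribute [local instance] Classical.propDecidable

noncomputable section

/-- A preference profile for `n` voters: each voter has a ballot, a list of
alternatives ordered from most preferred (head) to least preferred (last). -/
abbrev Profile (n : ℕ) (A : Type*) := Fin n → List A

variable {A : Type*} [DecidableEq A]

/-- A valid profile: every ballot is a strict linear order on the alternatives,
i.e. a duplicate-free list containing every alternative. -/
def IsProfile {n : ℕ} (P : Profile n A) : Prop :=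
  ∀ i, (P i).Nodup ∧ ∀ a : A, a ∈ P i

/-- The voter with ballot `l` prefers `x` to `y`. -/
def Prefers (l : List A) (x y : A) : Prop := l.idxOf x < l.idxOf y

/-- The number of voters who rank `a` last (at the bottom of their list). -/
def lastCount {n : ℕ} (P : Profile n A) (a : A) : ℕ :=
  (univ.filter fun i => (P i).getLast? = some a).card

/-- The number of voters who rank `a` first (at the top of their list). -/
def firstCount {n : ℕ} (P : Profile n A) (a : A) : ℕ :=
  (univ.filter fun i => (P i).head? = some a).card

/-- The number of voters preferring `x` to `y`. -/
def prefCount {n : ℕ} (P : Profile n A) (x y : A) : ℕ :=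
  (univ.filter fun i => Prefers (P i) x y).card

/-- `x` defeats `y` in a pairwise majority contest: strictly more voters
prefer `x` to `y` than prefer `y` to `x`. -/
def Defeats {n : ℕ} (P : Profile n A) (x y : A) : Prop :=
  prefCount P y x < prefCount P x y

/-- Condorcet's method: the winners are the alternatives defeated by no other alternative. -/
def CondorcetWinners {n : ℕ} (P : Profile n A) : Set A :=
  {a | ∀ b, ¬ Defeats P b a}

/-- `a` is a Condorcet winner: it is the unique winner of Condorcet's method. -/
def IsCondorcetWinner {n : ℕ} (P : Profile n A) (a : A) : Prop :=
  CondorcetWinners P = {a}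

/-- The bottom alternative of ballot `l` among the still-remaining alternatives `S`. -/
def bottomAmong (S : Finset A) (l : List A) : Option A :=
  (l.filter fun x => decide (x ∈ S)).getLast?

/-- The number of voters ranking `a` last among the remaining alternatives `S`. -/
def hLastCount {n : ℕ} (P : Profile n A) (S : Finset A) (a : A) : ℕ :=
  (univ.filter fun i => bottomAmong S (P i) = some a).card

/-- One round of the L.P.R. procedure: delete from `S` the alternative(s)
currently appearing at the bottom of the largest number of lists,
i.e. keep those that are not maximal. -/
def lprStep {n : ℕ} (P : Profile n A) (S : Finset A) : Finset A :=
  S.filter fun a => ∃ b ∈ S, hLastCount P S a < hLastCount P S b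

/-- Iterating the L.P.R. rounds; once a round would delete every remaining
alternative, the process stops (those alternatives are the ones deleted last). -/
def lprIter {n : ℕ} [Fintype A] (P : Profile n A) : ℕ → Finset A
  | 0 => Finset.univ
  | k + 1 =>
      let S := lprIter P k
      if lprStep P S = ∅ then S else lprStep P S

/-- L.P.R. winners: the alternative(s) deleted in the final round. -/
def LPRWinners {n : ℕ} [Fintype A] (P : Profile n A) : Finset A :=
  lprIter P (Fintype.card A)

/-! A winner `a` either survived a round that deleted alternatives from the remaining set `S`:
then some `b ∈ S` is at the bottom of (the restriction to `S` of) strictly more lists than `a`,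
and these two disjoint sets of voters give `2 h(a) < n`. Or no round ever deleted anything:
then all alternatives are at the bottom of equally many lists, and three of them give
`3 h(a) ≤ n`. In both cases a voter ranking `a` last also ranks it last within `S`. -/

section Counting

variable {n : ℕ} (P : Profile n A)

lemma lastCount_le_hLastCount {S : Finset A} {a : A} (ha : a ∈ S) :
    lastCount P a ≤ hLastCount P S a := by
  refine card_le_card fun i hi => ?_
  simp only [mem_filter, mem_univ, true_and] at hi ⊢
  obtain ⟨l, hl⟩ := List.getLast?_eq_some_iff.mp hi
  simp [bottomAmong, hl, List.filter_append, ha]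

lemma sum_hLastCount_le (S T : Finset A) : ∑ x ∈ T, hLastCount P S x ≤ n := by
  unfold hLastCount
  rw [← card_biUnion]
  · exact (card_le_univ _).trans_eq (Fintype.card_fin n)
  · intro x _ y _ hxy
    exact disjoint_filter.2 fun i _ hx hy => hxy (Option.some_injective _ (hx.symm.trans hy))

lemma two_mul_hLastCount_lt_of_mem_lprStep {S : Finset A} {a : A} (ha : a ∈ lprStep P S) :
    2 * hLastCount P S a < n := by
  obtain ⟨-, b, -, hab⟩ := mem_filter.mp ha
  have hne : a ≠ b := by rintro rfl; exact hab.false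
  have := sum_hLastCount_le P S {a, b}
  rw [sum_pair hne] at this
  omega

lemma hLastCount_le_of_lprStep_eq_empty {S : Finset A} (hS : lprStep P S = ∅) {a b : A}
    (ha : a ∈ S) (hb : b ∈ S) : hLastCount P S a ≤ hLastCount P S b := by
  by_contra! hlt
  have : b ∈ lprStep P S := mem_filter.mpr ⟨hb, a, ha, hlt⟩
  simp [hS] at this

lemma two_mul_hLastCount_lt_of_lprStep_eq_empty (hn : 0 < n) {S : Finset A} (hS3 : 3 ≤ #S)
    (hS : lprStep P S = ∅) {a : A} (ha : a ∈ S) : 2 * hLastCount P S a < n := by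
  have hsum : #S * hLastCount P S a ≤ n := by
    calc #S * hLastCount P S a = ∑ x ∈ S, hLastCount P S a := by rw [sum_const, smul_eq_mul]
      _ ≤ ∑ x ∈ S, hLastCount P S x :=
        sum_le_sum fun x hx => hLastCount_le_of_lprStep_eq_empty P hS ha hx
      _ ≤ n := sum_hLastCount_le P S S
  have : 3 * hLastCount P S a ≤ n := (Nat.mul_le_mul_right _ hS3).trans hsum
  omega

end Counting

section Iteration

variable [Fintype A] {n : ℕ} (P : Profile n A)

lemma lprIter_nonempty [Nonempty A] (k : ℕ) : (lprIter P k).Nonempty := by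
  induction k with
  | zero => exact univ_nonempty
  | succ k ih =>
    rw [lprIter]
    split_ifs with h
    · exact ih
    · exact nonempty_iff_ne_empty.mpr h

lemma lprStep_univ_eq_empty_or_mem_lprStep_of_mem_lprIter {a : A} (k : ℕ)
    (ha : a ∈ lprIter P (k + 1)) : lprStep P univ = ∅ ∨ ∃ S, a ∈ lprStep P S := by
  induction k with
  | zero =>
    by_cases h : lprStep P univ = ∅
    · exact .inl h
    · rw [lprIter, lprIter, if_neg h] at ha
      exact .inr ⟨univ, ha⟩
  | succ k ih =>
    rw [lprIter] at ha
    split_ifs at ha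
    · exact ih ha
    · exact .inr ⟨_, ha⟩

end Iteration

theorem lpr_AAW_and_nonSD_general {A : Type*} [Fintype A] [DecidableEq A]
    (hA : 3 ≤ Fintype.card A) {n : ℕ} (hn : 0 < n)
    (P : Profile n A) :
    (LPRWinners P).Nonempty ∧ ∀ a ∈ LPRWinners P, 2 * lastCount P a < n := by
  have : Nonempty A := Fintype.card_pos_iff.mp (by omega)
  refine ⟨lprIter_nonempty P _, fun a ha => ?_⟩
  obtain ⟨k, hk⟩ : ∃ k, Fintype.card A = k + 1 := ⟨_, (Nat.succ_pred_eq_of_pos (by omega)).symm⟩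
  rw [LPRWinners, hk] at ha
  rcases lprStep_univ_eq_empty_or_mem_lprStep_of_mem_lprIter P k ha with h | ⟨S, haS⟩
  · have := two_mul_hLastCount_lt_of_lprStep_eq_empty P hn (by simpa using hA) h (mem_univ a)
    have := lastCount_le_hLastCount P (mem_univ a)
    omega
  · have := two_mul_hLastCount_lt_of_mem_lprStep P haS
    have := lastCount_le_hLastCount P (mem_filter.mp haS).1
    omega

/-- for at least 3 alternatives and a positive number of voters,
the L.P.R. procedure satisfies always-a-winner and nonexistence of social
disappointment: no L.P.R. winner is ranked last by at least half of the voters. -/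
theorem lpr_AAW_and_nonSD {A : Type*} [Fintype A] [DecidableEq A]
    (hA : 3 ≤ Fintype.card A) {n : ℕ} (hn : 0 < n)
    (P : Profile n A) (hP : IsProfile P) :
    (LPRWinners P).Nonempty ∧ ∀ a ∈ LPRWinners P, 2 * lastCount P a < n :=
  lpr_AAW_and_nonSD_general hA hn P
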